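/- arXiv:1707.08346 — 6 statements merged into one kernel-verified Lean document; each statement's English description precedes it below -/
import Mathlib

section
/- Every uncountable algebraically closed field is ℵ₀-complete: if K is an uncountable algebraically closed field and S is a countable system of polynomial equations over K in countably many indeterminates such that every finite sub-system of S has a solution in K, then S has a solution in K. -/
/-!
A system all of whose finite subsystems are solvable generates a proper ideal of
`K[X₀, X₁, …]`; let `m` be a maximal ideal above it. The residue field `L` of `m` has
countable dimension over `K`, while `{(t - a)⁻¹ | a ∈ K}` is linearly independent for
every `t ∈ L` transcendental over `K`. As `K` is uncountable, `L / K` is algebraic, so it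
embeds into the algebraically closed field `K`, and the images of the variables solve the system.
-/

/-- A field `K` is ℵ₀-complete if every countable system of polynomial equations over `K`
(in countably many indeterminates) has a solution in `K` whenever every finite
sub-system has a solution in `K`. -/
def Aleph0Complete (K : Type*) [Field K] : Prop :=
  ∀ S : ℕ → MvPolynomial ℕ K,
    (∀ T : Finset ℕ, ∃ x : ℕ → K, ∀ N ∈ T, MvPolynomial.eval x (S N) = 0) →
    ∃ x : ℕ → K, ∀ N : ℕ, MvPolynomial.eval x (S N) = 0

open Cardinal

universe u v

theorem Algebra.IsAlgebraic.of_lift_rank_lt_lift_mk {K : Type u} {L : Type v} [Field K]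
    [Field L] [Algebra K L] (h : lift.{u} (Module.rank K L) < lift.{v} #K) :
    Algebra.IsAlgebraic K L :=
  ⟨fun _ => by_contra fun ht =>
    h.not_ge (Transcendental.linearIndependent_sub_inv ht).cardinal_lift_le_rank⟩

namespace MvPolynomial

theorem span_range_ne_top_of_finite_common_zero {R σ ι : Type*} [CommRing R] [Nontrivial R]
    (S : ι → MvPolynomial σ R) (h : ∀ T : Finset ι, ∃ x : σ → R, ∀ i ∈ T, eval x (S i) = 0) :
    Ideal.span (Set.range S) ≠ ⊤ := by
  classical
  rw [Ne, Ideal.span_eq_top_iff_finite]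
  rintro ⟨s, hsS, hs⟩
  rw [← Set.image_univ, Finset.subset_set_image_iff] at hsS
  obtain ⟨T, -, rfl⟩ := hsS
  obtain ⟨x, hx⟩ := h T
  have hker : Ideal.span ↑(T.image S) ≤ RingHom.ker (eval x) :=
    Ideal.span_le.2 fun _ hp => by
      obtain ⟨i, hi, rfl⟩ := Finset.mem_image.1 hp
      exact hx i hi
  simpa using hker (hs ▸ Submodule.mem_top : (1 : MvPolynomial σ R) ∈ Ideal.span _)

theorem rank_quotient_le_aleph0 {K σ : Type*} [Field K] [Countable σ]
    (I : Ideal (MvPolynomial σ K)) : Module.rank K (MvPolynomial σ K ⧸ I) ≤ ℵ₀ := by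
  refine (rank_quotient_le (I.restrictScalars K)).trans ?_
  rw [rank_eq_lift]
  simp [lift_le_aleph0, mk_le_aleph0]

theorem zeroLocus_nonempty_of_ne_top {K σ : Type*} [Field K] [IsAlgClosed K] [Uncountable K]
    [Countable σ] {I : Ideal (MvPolynomial σ K)} (hI : I ≠ ⊤) : (zeroLocus K I).Nonempty := by
  obtain ⟨m, hm, hIm⟩ := Ideal.exists_le_maximal I hI
  let := Ideal.Quotient.field m
  have : Algebra.IsAlgebraic K (MvPolynomial σ K ⧸ m) :=
    .of_lift_rank_lt_lift_mk <| (lift_le_aleph0.2 (rank_quotient_le_aleph0 m)).trans_lt <| by simp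
  have : Module.IsTorsionFree K (MvPolynomial σ K ⧸ m) := inferInstance
  let φ : (MvPolynomial σ K ⧸ m) →ₐ[K] K := IsAlgClosed.lift
  have hφ : φ.comp (Ideal.Quotient.mkₐ K m) = aeval fun i => φ (Ideal.Quotient.mk m (X i)) :=
    algHom_ext fun _ => by simp
  refine ⟨fun i => φ (Ideal.Quotient.mk m (X i)), fun p hp => ?_⟩
  rw [← hφ, AlgHom.comp_apply, Ideal.Quotient.mkₐ_eq_mk,
    Ideal.Quotient.eq_zero_iff_mem.2 (hIm hp), map_zero]

end MvPolynomial

open MvPolynomial in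
/-- Every uncountable algebraically closed field is ℵ₀-complete. -/
theorem uncountable_algClosed_aleph0Complete (K : Type*) [Field K] [IsAlgClosed K]
    [Uncountable K] : Aleph0Complete K := by
  intro S hS
  obtain ⟨x, hx⟩ := zeroLocus_nonempty_of_ne_top (span_range_ne_top_of_finite_common_zero S hS)
  exact ⟨x, fun N => by simpa using hx (S N) (Ideal.subset_span ⟨N, rfl⟩)⟩
end

section
/- If K is an infinite field and x = (x₁, ..., xₙ), then the field extension K → K(x₁, ..., xₙ) of K into the field of rational functions in n variables is algebraically pure. -/
/-!
A solution of the system in `K(x₁,…,xₙ)` consists of finitely many fractions; let `Q ≠ 0` be a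
common denominator. As `K` is infinite, `Q(a) ≠ 0` at some point `a ∈ Kⁿ`, so evaluation at `a`
extends to a `K`-algebra map `K[x][1/Q] → K`, and it sends the solution to a solution in `K`.
-/

/-- A morphism of fields `φ : K →+* L` is algebraically pure if every finite system of
polynomial equations with coefficients in `K` having a solution in `L` has a solution in `K`. -/
def AlgebraicallyPure {K L : Type*} [Field K] [Field L] (φ : K →+* L) : Prop :=
  ∀ (m r : ℕ) (f : Fin r → MvPolynomial (Fin m) K),
    (∃ y : Fin m → L, ∀ k, MvPolynomial.eval y (MvPolynomial.map φ (f k)) = 0) →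
    ∃ y : Fin m → K, ∀ k, MvPolynomial.eval y (f k) = 0

open MvPolynomial nonZeroDivisors

theorem algebraicallyPure_of_exists_subalgebra_algHom {K L : Type*} [Field K] [Field L]
    [Algebra K L]
    (h : ∀ (m : ℕ) (y : Fin m → L),
      ∃ R : Subalgebra K L, (∀ i, y i ∈ R) ∧ Nonempty (R →ₐ[K] K)) :
    AlgebraicallyPure (algebraMap K L) := by
  rintro m r f ⟨y, hy⟩
  obtain ⟨R, hyR, ⟨φ⟩⟩ := h m y
  let z : Fin m → R := fun i ↦ ⟨y i, hyR i⟩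
  have hz : ∀ k, aeval z (f k) = 0 := fun k ↦ Subtype.val_injective <| by
    rw [← R.val_apply, comp_aeval_apply, ZeroMemClass.coe_zero, ← hy k, eval_map, ← aeval_def]
    rfl
  refine ⟨φ ∘ z, fun k ↦ ?_⟩
  have := congrArg φ (hz k)
  rwa [comp_aeval_apply, map_zero] at this

theorem IsFractionRing.exists_subalgebra_algHom_of_forall_ne_zero {K A F : Type*} [Field K]
    [CommRing A] [IsDomain A] [Algebra K A] [Field F] [Algebra A F] [IsFractionRing A F]
    [Algebra K F] [IsScalarTower K A F] (h : ∀ Q : A, Q ≠ 0 → ∃ φ : A →ₐ[K] K, φ Q ≠ 0)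
    {ι : Type*} [Finite ι] (y : ι → F) :
    ∃ R : Subalgebra K F, (∀ i, y i ∈ R) ∧ Nonempty (R →ₐ[K] K) := by
  obtain ⟨⟨Q, hQ⟩, hy⟩ := IsLocalization.exist_integer_multiples_of_finite A⁰ y
  obtain ⟨φ, hφ⟩ := h Q (nonZeroDivisors.ne_zero hQ)
  have hpow : Submonoid.powers Q ≤ A⁰ := Submonoid.powers_le.2 hQ
  let S := Localization.subalgebra.ofField F (Submonoid.powers Q) hpow
  have : IsLocalization.Away Q S := Localization.subalgebra.isLocalization_ofField F _ hpow
  let ψ : S →ₐ[K] K := IsLocalization.Away.liftAlgHom Q (f := φ) (isUnit_iff_ne_zero.2 hφ)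
  refine ⟨S.restrictScalars K, fun i ↦ ?_, ⟨ψ⟩⟩
  obtain ⟨a, ha : algebraMap A F a = Q • y i⟩ := hy i
  refine ⟨a, Q, Submonoid.mem_powers Q, ?_⟩
  have hQF : algebraMap A F Q ≠ 0 := IsFractionRing.to_map_ne_zero_of_mem_nonZeroDivisors hQ
  rw [eq_mul_inv_iff_mul_eq₀ hQF, ha, Algebra.smul_def, mul_comm]

theorem MvPolynomial.exists_eval_ne_zero {R σ : Type*} [CommRing R] [IsDomain R] [Infinite R]
    {p : MvPolynomial σ R} (hp : p ≠ 0) : ∃ a : σ → R, eval a p ≠ 0 := by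
  contrapose! hp
  exact MvPolynomial.funext fun a ↦ by simp [hp a]

/-- If `K` is an infinite field, the extension `K → K(x₁,…,xₙ)` into the field of rational
functions in `n` variables is algebraically pure. -/
theorem rationalFunctionField_algebraicallyPure (K : Type*) [Field K] [Infinite K] (n : ℕ) :
    AlgebraicallyPure (algebraMap K (FractionRing (MvPolynomial (Fin n) K))) := by
  refine algebraicallyPure_of_exists_subalgebra_algHom fun _ ↦
    IsFractionRing.exists_subalgebra_algHom_of_forall_ne_zero (A := MvPolynomial (Fin n) K)
      fun Q hQ ↦ ?_
  obtain ⟨a, ha⟩ := exists_eval_ne_zero hQ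
  exact ⟨aeval a, ha⟩
end

section
/- Let K be an ℵ₀-complete field, x = (x₁,...,xₙ), Y = (Y₁,...,Y_m), f = (f₁,...,f_r) ∈ K[[x]][Y]^r, and J_i ⊆ {1,...,n} for each i ∈ {1,...,m}. If for every c ∈ ℕ there exists y^(c) ∈ K[[x]]^m with y^(c)_i ∈ K[[x_{J_i}]] for every i and f(y^(c)) ≡ 0 modulo (x)^c, then there exists y ∈ K[[x]]^m with y_i ∈ K[[x_{J_i}]] for every i and f(y) = 0. -/
/-- `g ∈ K[[x_J]]`: the power series `g` only involves the variables `x_j` for `j ∈ J`. -/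
def DependsOnVars {K : Type*} [Field K] {n : ℕ} (J : Set (Fin n)) (g : MvPowerSeries (Fin n) K) : Prop :=
  ∀ α : Fin n →₀ ℕ, ¬ (↑α.support ⊆ J) → MvPowerSeries.coeff α g = 0

/-- `OrdGE g c` means `ord g ≥ c`, i.e. `g ∈ (x)^c`. -/
def OrdGE {K : Type*} [Field K] {n : ℕ} (g : MvPowerSeries (Fin n) K) (c : ℕ) : Prop :=
  ∀ α : Fin n →₀ ℕ, (∑ j, α j) < c → MvPowerSeries.coeff α g = 0

/-- `OrdEq g c` means `ord g = c` exactly. -/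
def OrdEq {K : Type*} [Field K] {n : ℕ} (g : MvPowerSeries (Fin n) K) (c : ℕ) : Prop :=
  OrdGE g c ∧ ¬ OrdGE g (c + 1)

/-!
The coefficients of the unknown series `yᵢ` are countably many unknowns in `K`, and each
coefficient of `fₖ(y)` is a polynomial in them. So `f(y) = 0` together with the constraints
`yᵢ ∈ K[[x_{Jᵢ}]]` (vanishing of the coefficients of the forbidden monomials) is a countable
polynomial system over `K`. A finite subsystem only involves coefficients of `fₖ(y)` of degree
below some `c`, and is solved by the coefficients of the approximate solution `y⁽ᶜ⁾`; by
ℵ₀-completeness the whole system has a solution.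
-/

open MvPolynomial

theorem Aleph0Complete.exists_forall_eval_eq_zero {K : Type*} [Field K] (hK : Aleph0Complete K)
    {σ ι : Type*} [Countable σ] [Countable ι] (S : ι → MvPolynomial σ K)
    (hS : ∀ T : Finset ι, ∃ x : σ → K, ∀ e ∈ T, eval x (S e) = 0) :
    ∃ x : σ → K, ∀ e, eval x (S e) = 0 := by
  have := Encodable.ofCountable σ
  have := Encodable.ofCountable ι
  let extend (x : σ → K) : ℕ → K := fun N => (Encodable.decode₂ σ N).elim 0 x
  have eval_rename_extend (x : σ → K) (p : MvPolynomial σ K) :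
      eval (extend x) (rename Encodable.encode p) = eval x p := by
    have : extend x ∘ Encodable.encode = x := funext fun s => by simp [extend]
    rw [eval_rename, this]
  let S' : ℕ → MvPolynomial ℕ K := fun N =>
    (Encodable.decode₂ ι N).elim 0 fun e => rename Encodable.encode (S e)
  obtain ⟨x, hx⟩ := hK S' fun T => by
    obtain ⟨x, hx⟩ := hS (T.preimage Encodable.encode Encodable.encode_injective.injOn)
    refine ⟨extend x, fun N hN => ?_⟩
    rcases h : Encodable.decode₂ ι N with _ | e
    · simp [S', h]
    · obtain rfl := Encodable.mem_decode₂.mp h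
      simpa [S', Encodable.encodek₂, eval_rename_extend] using hx e (by simpa using hN)
  refine ⟨x ∘ Encodable.encode, fun e => ?_⟩
  simpa [S', Encodable.encodek₂, eval_rename] using hx (Encodable.encode e)

namespace MvPowerSeries

variable {R : Type*} [CommRing R] {σ τ : Type*}

def ofCoeffs (z : σ × (τ →₀ ℕ) → R) (i : σ) : MvPowerSeries τ R := fun β => z (i, β)

@[simp]
theorem coeff_ofCoeffs (z : σ × (τ →₀ ℕ) → R) (i : σ) (β : τ →₀ ℕ) :
    coeff β (ofCoeffs z i) = z (i, β) := rfl

/-- `ofCoeffs X` is the generic family of power series, whose coefficients are indeterminates. -/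
noncomputable def coeffPoly (f : MvPolynomial σ (MvPowerSeries τ R)) (α : τ →₀ ℕ) :
    MvPolynomial (σ × (τ →₀ ℕ)) R :=
  coeff α (f.eval₂ (map MvPolynomial.C) (ofCoeffs MvPolynomial.X))

theorem eval_coeffPoly (f : MvPolynomial σ (MvPowerSeries τ R)) (α : τ →₀ ℕ)
    (z : σ × (τ →₀ ℕ) → R) :
    eval z (coeffPoly f α) = coeff α (eval (ofCoeffs z) f) := by
  have map_eval_comp_map_C : (map (σ := τ) (eval z)).comp (map MvPolynomial.C) = RingHom.id _ := by
    rw [← map_comp, show (eval z).comp MvPolynomial.C = RingHom.id R from by ext; simp, map_id]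
  have map_eval_ofCoeffs_X : map (eval z) ∘ ofCoeffs MvPolynomial.X = ofCoeffs z := by
    funext i; ext β; simp
  rw [coeffPoly, ← coeff_map, eval₂_comp_left, map_eval_comp_map_C, map_eval_ofCoeffs_X,
    eval₂_id]

end MvPowerSeries

section ConstrainedSystem

open MvPowerSeries

variable {K : Type*} [Field K] {n m r : ℕ}

/-- An equation `(k, α)` says that the coefficient of `x^α` in `f k` vanishes; an equation
`(i, α)` says that `y i` has no monomial `x^α` outside `K[[x_{J i}]]`. -/
abbrev ConstrainedSystemIndex (r : ℕ) (J : Fin m → Set (Fin n)) : Type :=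
  (Fin r × (Fin n →₀ ℕ)) ⊕ {p : Fin m × (Fin n →₀ ℕ) // ¬ ↑p.2.support ⊆ J p.1}

noncomputable def constrainedSystem
    (f : Fin r → MvPolynomial (Fin m) (MvPowerSeries (Fin n) K)) (J : Fin m → Set (Fin n)) :
    ConstrainedSystemIndex r J → MvPolynomial (Fin m × (Fin n →₀ ℕ)) K :=
  Sum.elim (fun e => coeffPoly (f e.1) e.2) (fun p => X p.1)

def ConstrainedSystemIndex.degree {J : Fin m → Set (Fin n)} : ConstrainedSystemIndex r J → ℕ :=
  Sum.elim (fun e => ∑ j, e.2 j) 0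

variable {f : Fin r → MvPolynomial (Fin m) (MvPowerSeries (Fin n) K)} {J : Fin m → Set (Fin n)}

theorem ofCoeffs_solves_of_forall_eval_constrainedSystem_eq_zero
    {z : Fin m × (Fin n →₀ ℕ) → K} (hz : ∀ e, eval z (constrainedSystem f J e) = 0) :
    (∀ i, DependsOnVars (J i) (ofCoeffs z i)) ∧ ∀ k, eval (ofCoeffs z) (f k) = 0 := by
  refine ⟨fun i α hα => ?_, fun k => MvPowerSeries.ext fun α => ?_⟩
  · simpa [constrainedSystem] using hz (.inr ⟨(i, α), hα⟩)
  · simpa [constrainedSystem, eval_coeffPoly] using hz (.inl (k, α))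

theorem eval_constrainedSystem_eq_zero_of_ordGE {y : Fin m → MvPowerSeries (Fin n) K} {c : ℕ}
    (hyJ : ∀ i, DependsOnVars (J i) (y i)) (hyf : ∀ k, OrdGE (eval y (f k)) c)
    {e : ConstrainedSystemIndex r J} (he : e.degree < c) :
    eval (fun p => coeff p.2 (y p.1)) (constrainedSystem f J e) = 0 := by
  rcases e with ⟨k, α⟩ | ⟨⟨i, α⟩, hα⟩
  · exact (eval_coeffPoly (f k) α _).trans (hyf k α he)
  · simpa [constrainedSystem] using hyJ i α hα

end ConstrainedSystem

/-- Approximation with constraints over an ℵ₀-complete field: if the system `f = 0`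
(with coefficients in `K[[x]]`) has, for every `c`, an approximate solution modulo `(x)^c`
whose `i`-th component lies in `K[[x_{J_i}]]`, then it has an exact solution with the same
constraints. -/
theorem approximation_with_constraints {K : Type*} [Field K] (hK : Aleph0Complete K)
    (n m r : ℕ) (f : Fin r → MvPolynomial (Fin m) (MvPowerSeries (Fin n) K))
    (J : Fin m → Set (Fin n))
    (h : ∀ c : ℕ, ∃ y : Fin m → MvPowerSeries (Fin n) K,
      (∀ i, DependsOnVars (J i) (y i)) ∧ ∀ k, OrdGE (MvPolynomial.eval y (f k)) c) :
    ∃ y : Fin m → MvPowerSeries (Fin n) K,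
      (∀ i, DependsOnVars (J i) (y i)) ∧ ∀ k, MvPolynomial.eval y (f k) = 0 := by
  obtain ⟨z, hz⟩ := hK.exists_forall_eval_eq_zero (constrainedSystem f J) fun T => by
    obtain ⟨y, hyJ, hyf⟩ := h (T.sup ConstrainedSystemIndex.degree + 1)
    exact ⟨_, fun e he =>
      eval_constrainedSystem_eq_zero_of_ordGE hyJ hyf (Nat.lt_succ_of_le (T.le_sup he))⟩
  exact ⟨_, ofCoeffs_solves_of_forall_eval_constrainedSystem_eq_zero hz⟩
end

section
/- Moreover, in the setting of Theorem on approximation over algebraically pure extensions, the solution y ∈ K[[x]]^m can be chosen so that the support of each y_i is contained in the support of ŷ_i, i.e., every monomial appearing in y_i with nonzero coefficient appears with nonzero coefficient in ŷ_i. -/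
open MvPolynomial

namespace MvPolynomial

variable {R S σ τ : Type*} [CommSemiring R] [CommSemiring S]

variable (R σ) in
noncomputable def genericSeries (i : τ) :
    MvPowerSeries σ (MvPolynomial (τ × (σ →₀ ℕ)) R) :=
  fun β => X (i, β)

@[simp]
theorem coeff_genericSeries (i : τ) (β : σ →₀ ℕ) :
    MvPowerSeries.coeff β (genericSeries R σ i) = X (i, β) :=
  rfl

noncomputable def evalGenericSeries :
    MvPolynomial τ (MvPowerSeries σ R) →+* MvPowerSeries σ (MvPolynomial (τ × (σ →₀ ℕ)) R) :=
  eval₂Hom (MvPowerSeries.map C) (genericSeries R σ)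

theorem map_eval_evalGenericSeries (y : τ → MvPowerSeries σ R)
    (f : MvPolynomial τ (MvPowerSeries σ R)) :
    MvPowerSeries.map (eval fun p => MvPowerSeries.coeff p.2 (y p.1)) (evalGenericSeries f) =
      eval y f := by
  have : (MvPowerSeries.map (eval fun p => MvPowerSeries.coeff p.2 (y p.1))).comp
      evalGenericSeries = eval y := by
    ext <;> simp [evalGenericSeries, MvPowerSeries.coeff_map]
  exact RingHom.congr_fun this f

theorem coeff_eval_eq_eval_coeff_evalGenericSeries (y : τ → MvPowerSeries σ R)
    (f : MvPolynomial τ (MvPowerSeries σ R)) (α : σ →₀ ℕ) :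
    MvPowerSeries.coeff α (eval y f) =
      eval (fun p => MvPowerSeries.coeff p.2 (y p.1))
        (MvPowerSeries.coeff α (evalGenericSeries f)) := by
  rw [← map_eval_evalGenericSeries, MvPowerSeries.coeff_map]

theorem map_evalGenericSeries (φ : R →+* S) (f : MvPolynomial τ (MvPowerSeries σ R)) :
    MvPowerSeries.map (map φ) (evalGenericSeries f) =
      evalGenericSeries (map (MvPowerSeries.map φ) f) := by
  have : (MvPowerSeries.map (map φ)).comp (evalGenericSeries (R := R) (σ := σ) (τ := τ)) =
      evalGenericSeries.comp (map (MvPowerSeries.map φ)) := by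
    ext <;> simp [evalGenericSeries, MvPowerSeries.coeff_map]
  exact RingHom.congr_fun this f

theorem exists_fin_rename_of_finite {ι : Type*} [Finite ι] (p : ι → MvPolynomial σ R) :
    ∃ (k : ℕ) (g : Fin k → σ) (q : ι → MvPolynomial (Fin k) R),
      Function.Injective g ∧ ∀ i, rename g (q i) = p i := by
  classical
  have := Fintype.ofFinite ι
  let V : Finset σ := Finset.univ.biUnion fun i => (p i).vars
  let g : Fin V.card → σ := Subtype.val ∘ V.equivFin.symm
  have hg : Function.Injective g := Subtype.val_injective.comp V.equivFin.symm.injective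
  have hq (i : ι) : ∃ q, rename g q = p i := by
    refine exists_rename_eq_of_vars_subset_range _ g hg fun v hv => ?_
    have hvV : v ∈ V := Finset.mem_biUnion.2 ⟨i, Finset.mem_univ i, hv⟩
    exact ⟨V.equivFin ⟨v, hvV⟩, by simp [g]⟩
  choose q hq using hq
  exact ⟨V.card, g, q, hg, hq⟩

end MvPolynomial

section

variable {K L σ ι : Type*} [Field K] [Field L]

theorem Aleph0Complete.exists_eval_eq_zero [Countable σ] [Countable ι] (hK : Aleph0Complete K)
    (p : ι → MvPolynomial σ K) (h : ∀ s : Finset ι, ∃ y : σ → K, ∀ i ∈ s, eval y (p i) = 0) :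
    ∃ y : σ → K, ∀ i, eval y (p i) = 0 := by
  classical
  rcases isEmpty_or_nonempty ι with hι | hι
  · exact ⟨0, isEmptyElim⟩
  obtain ⟨g, hg⟩ := exists_surjective_nat ι
  obtain ⟨c, hc⟩ := Countable.exists_injective_nat σ
  obtain ⟨x, hx⟩ := hK (fun N => rename c (p (g N))) fun T => by
    obtain ⟨y, hy⟩ := h (T.image g)
    refine ⟨Function.extend c y 0, fun N hN => ?_⟩
    rw [eval_rename, Function.extend_comp hc]
    exact hy _ (Finset.mem_image_of_mem g hN)
  refine ⟨x ∘ c, fun i => ?_⟩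
  obtain ⟨N, rfl⟩ := hg i
  rw [← eval_rename]
  exact hx N

theorem AlgebraicallyPure.exists_eval_eq_zero [Finite ι] {φ : K →+* L}
    (hφ : AlgebraicallyPure φ) (p : ι → MvPolynomial σ K)
    (h : ∃ y : σ → L, ∀ i, eval y (map φ (p i)) = 0) :
    ∃ y : σ → K, ∀ i, eval y (p i) = 0 := by
  obtain ⟨r, ⟨e⟩⟩ := Finite.exists_equiv_fin ι
  obtain ⟨k, g, q, hg, hq⟩ := exists_fin_rename_of_finite p
  obtain ⟨y, hy⟩ := h
  obtain ⟨z, hz⟩ := hφ k r (q ∘ e.symm) ⟨y ∘ g, fun j => by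
    rw [Function.comp_apply, ← eval_rename, ← map_rename, hq]
    exact hy _⟩
  refine ⟨Function.extend g z 0, fun i => ?_⟩
  rw [← hq, eval_rename, Function.extend_comp hg, ← e.symm_apply_apply i]
  exact hz (e i)

theorem AlgebraicallyPure.exists_eval_eq_zero_of_countable [Countable σ] [Countable ι]
    {φ : K →+* L} (hφ : AlgebraicallyPure φ) (hK : Aleph0Complete K) (p : ι → MvPolynomial σ K)
    (h : ∃ y : σ → L, ∀ i, eval y (map φ (p i)) = 0) :
    ∃ y : σ → K, ∀ i, eval y (p i) = 0 :=
  hK.exists_eval_eq_zero p fun s => by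
    obtain ⟨y, hy⟩ := hφ.exists_eval_eq_zero (fun i : s => p i) (h.imp fun _ hy i => hy i)
    exact ⟨y, fun i hi => hy ⟨i, hi⟩⟩

end

/-- In the setting of approximation over algebraically pure extensions, the solution `y`
over `K` can be chosen so that the support of each `y_i` is contained in the support of
`yh_i`. -/
theorem approximation_support_contained {K K' : Type*} [Field K] [Field K'] (φ : K →+* K')
    (hpure : AlgebraicallyPure φ) (hK : Aleph0Complete K)
    (n m r : ℕ) (f : Fin r → MvPolynomial (Fin m) (MvPowerSeries (Fin n) K))
    (yh : Fin m → MvPowerSeries (Fin n) K')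
    (hsol : ∀ k, MvPolynomial.eval yh
      (MvPolynomial.map (MvPowerSeries.map φ) (f k)) = 0) :
    ∃ y : Fin m → MvPowerSeries (Fin n) K,
      (∀ k, MvPolynomial.eval y (f k) = 0) ∧
      (∀ i (α : Fin n →₀ ℕ),
        MvPowerSeries.coeff α (y i) ≠ 0 → MvPowerSeries.coeff α (yh i) ≠ 0) := by
  obtain ⟨w, hw⟩ := hpure.exists_eval_eq_zero_of_countable hK
    (Sum.elim (fun q : Fin r × (Fin n →₀ ℕ) => MvPowerSeries.coeff q.2 (evalGenericSeries (f q.1)))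
      (fun p : {p : Fin m × (Fin n →₀ ℕ) // MvPowerSeries.coeff p.2 (yh p.1) = 0} => X p.1))
    ⟨fun p => MvPowerSeries.coeff p.2 (yh p.1), by
      rintro (⟨k, α⟩ | ⟨p, hp⟩)
      · rw [Sum.elim_inl, ← MvPowerSeries.coeff_map, map_evalGenericSeries,
          ← coeff_eval_eq_eval_coeff_evalGenericSeries, hsol k, map_zero]
      · simpa using hp⟩
  let y : Fin m → MvPowerSeries (Fin n) K := fun i α => w (i, α)
  refine ⟨y, fun k => ?_, fun i α hne hα => hne ?_⟩
  · ext α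
    rw [coeff_eval_eq_eval_coeff_evalGenericSeries, map_zero]
    exact hw (.inl (k, α))
  · have := hw (.inr ⟨(i, α), hα⟩)
    rwa [Sum.elim_inr, eval_X] at this
end

section
/- Let K be a field, K* an ultrapower of K over ℕ, and x = (x₁,...,xₙ). Then the quotient of (K[[x]])* (the ultrapower of K[[x]]) by the ideal ⋂_q (x)^q(K[[x]])* embeds naturally into K*[[x]], and an element of (K[[x]])* whose residue corresponds to a power series ȳ ∈ K*[[x]] satisfies f(ȳ) = 0 in K*[[x]] whenever f(y*) ∈ ⋂_q (x)^q (K[[x]])* for the original element y* and a polynomial system f over K[[x]]. -/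
/-!
Taking coefficients exchanges "sequence of power series" and "power series over `K^ℕ`", so
applying `π` coefficientwise gives a ring homomorphism `Φ`. Its kernel consists of the sequences
whose every coefficient vanishes `F`-almost everywhere; since only finitely many monomials have
degree `< c`, this is the same as lying in `(x)^c` `F`-almost everywhere for every `c`. As `Φ`
commutes with evaluating polynomials, `f(y*) ∈ ker Φ` gives `f(ȳ) = 0`.
-/

namespace MvPowerSeries

variable {σ ι R : Type*} [CommSemiring R]

def piRingEquiv : (ι → MvPowerSeries σ R) ≃+* MvPowerSeries σ (ι → R) where
  toFun g α i := coeff α (g i)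
  invFun φ i α := φ α i
  left_inv _ := rfl
  right_inv _ := rfl
  map_mul' g h := by
    classical
    ext α i
    change coeff α (g i * h i) = (∑ p ∈ Finset.HasAntidiagonal.antidiagonal α,
      (fun i => coeff p.1 (g i)) * fun i => coeff p.2 (h i)) i
    rw [coeff_mul, Finset.sum_apply]
    rfl
  map_add' _ _ := rfl

end MvPowerSeries

open MvPowerSeries

theorem forall_eventually_ordGE_iff {K : Type*} [Field K] {n : ℕ} {ι : Type*} (l : Filter ι)
    (g : ι → MvPowerSeries (Fin n) K) :
    (∀ c, ∀ᶠ q in l, OrdGE (g q) c) ↔ ∀ α, ∀ᶠ q in l, coeff α (g q) = 0 := by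
  refine ⟨fun h α => (h (∑ j, α j + 1)).mono fun q hq => hq α (Nat.lt_succ_self _),
    fun h c => ?_⟩
  have hfin : {α : Fin n →₀ ℕ | ∑ j, α j < c}.Finite := by
    simpa only [Finsupp.degree_eq_sum] using Finsupp.finite_of_degree_lt (σ := Fin n) c
  exact (Filter.eventually_all_finite hfin).2 fun α _ => h α

theorem MvPolynomial.hom_eval_pi {τ ι R S : Type*} [CommSemiring R] [CommSemiring S]
    (φ : (ι → R) →+* S) (f : MvPolynomial τ R) (y : τ → ι → R) :
    φ (fun q => MvPolynomial.eval (fun i => y i q) f) =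
      MvPolynomial.eval (fun i => φ (y i)) (MvPolynomial.map (φ.comp (Pi.constRingHom ι R)) f) := by
  have heval : (fun q => MvPolynomial.eval (fun i => y i q) f) =
      MvPolynomial.eval₂ (Pi.constRingHom ι R) y f := by
    funext q
    change _ = Pi.evalRingHom (fun _ => R) q (MvPolynomial.eval₂ (Pi.constRingHom ι R) y f)
    rw [MvPolynomial.hom_eval₂]
    rfl
  rw [heval, MvPolynomial.hom_eval₂, MvPolynomial.eval_map]

theorem ultrapower_powerSeries_residue_general {K L : Type*} [Field K] [Field L]
    (F : Ultrafilter ℕ) (π : (ℕ → K) →+* L)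
    (hker : ∀ a : ℕ → K, π a = 0 ↔ {q | a q = 0} ∈ F) (n : ℕ) :
    ∃ Φ : (ℕ → MvPowerSeries (Fin n) K) →+* MvPowerSeries (Fin n) L,
      (∀ (g : ℕ → MvPowerSeries (Fin n) K) (α : Fin n →₀ ℕ),
        MvPowerSeries.coeff α (Φ g) = π (fun q => MvPowerSeries.coeff α (g q))) ∧
      (∀ g : ℕ → MvPowerSeries (Fin n) K,
        Φ g = 0 ↔ ∀ c : ℕ, {q | OrdGE (g q) c} ∈ F) ∧
      (∀ (m r : ℕ) (f : Fin r → MvPolynomial (Fin m) (MvPowerSeries (Fin n) K))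
        (y : Fin m → ℕ → MvPowerSeries (Fin n) K),
        (∀ (k : Fin r) (c : ℕ),
          {q | OrdGE (MvPolynomial.eval (fun i => y i q) (f k)) c} ∈ F) →
        ∀ k, MvPolynomial.eval (fun i => Φ (y i))
          (MvPolynomial.map (Φ.comp (Pi.constRingHom ℕ (MvPowerSeries (Fin n) K)))
            (f k)) = 0) := by
  let Φ := (map π).comp (piRingEquiv : (ℕ → MvPowerSeries (Fin n) K) ≃+* _).toRingHom
  have hcoeff : ∀ g α, coeff α (Φ g) = π fun q => coeff α (g q) := fun _ _ => rfl
  have hzero : ∀ g, Φ g = 0 ↔ ∀ c, {q | OrdGE (g q) c} ∈ F := fun g => by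
    refine Iff.trans ?_ (forall_eventually_ordGE_iff (F : Filter ℕ) g).symm
    simp only [MvPowerSeries.ext_iff, hcoeff, map_zero, hker]
    rfl
  refine ⟨Φ, hcoeff, hzero, fun m r f y hy k => ?_⟩
  rw [← MvPolynomial.hom_eval_pi, hzero]
  exact hy k

/-- The ultrapower of `K[[x]]` modulo `⋂_q (x)^q (K[[x]])*` embeds into `K*[[x]]`: there is a
ring homomorphism `Φ` from sequences of power series to power series over the ultrapower
`L = K*` (presented by the surjection `π : (ℕ → K) →+* L` with the indicated kernel),
given coefficientwise by `π`, whose kernel is exactly the set of sequences lying in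
`⋂_q (x)^q` along the ultrafilter; moreover if a polynomial system `f` over `K[[x]]`
satisfies `f(y*) ∈ ⋂_q (x)^q (K[[x]])*` then the residue `ȳ` satisfies `f(ȳ) = 0` in
`K*[[x]]`. -/
theorem ultrapower_powerSeries_residue {K L : Type*} [Field K] [Field L]
    (F : Ultrafilter ℕ) (π : (ℕ → K) →+* L) (hsurj : Function.Surjective π)
    (hker : ∀ a : ℕ → K, π a = 0 ↔ {q | a q = 0} ∈ F) (n : ℕ) :
    ∃ Φ : (ℕ → MvPowerSeries (Fin n) K) →+* MvPowerSeries (Fin n) L,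
      (∀ (g : ℕ → MvPowerSeries (Fin n) K) (α : Fin n →₀ ℕ),
        MvPowerSeries.coeff α (Φ g) = π (fun q => MvPowerSeries.coeff α (g q))) ∧
      (∀ g : ℕ → MvPowerSeries (Fin n) K,
        Φ g = 0 ↔ ∀ c : ℕ, {q | OrdGE (g q) c} ∈ F) ∧
      (∀ (m r : ℕ) (f : Fin r → MvPolynomial (Fin m) (MvPowerSeries (Fin n) K))
        (y : Fin m → ℕ → MvPowerSeries (Fin n) K),
        (∀ (k : Fin r) (c : ℕ),
          {q | OrdGE (MvPolynomial.eval (fun i => y i q) (f k)) c} ∈ F) →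
        ∀ k, MvPolynomial.eval (fun i => Φ (y i))
          (MvPolynomial.map (Φ.comp (Pi.constRingHom ℕ (MvPowerSeries (Fin n) K)))
            (f k)) = 0) :=
  ultrapower_powerSeries_residue_general F π hker n
end

section
/- Let K be an uncountable algebraically closed field and (C_N)_{N∈ℕ} a decreasing sequence of nonempty constructible subsets of K^k. Then the intersection ⋂_{N∈ℕ} C_N is nonempty. -/
/-- A Zariski-closed subset of `K^k`: the common zero locus of a set of polynomials. -/
def ZClosed {K : Type*} [Field K] {k : ℕ} (S : Set (Fin k → K)) : Prop :=
  ∃ T : Set (MvPolynomial (Fin k) K), S = {x | ∀ p ∈ T, MvPolynomial.eval x p = 0}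

/-- A constructible subset of `K^k`: a finite union of differences of Zariski-closed sets. -/
def ZConstructible {K : Type*} [Field K] {k : ℕ} (S : Set (Fin k → K)) : Prop :=
  ∃ (r : ℕ) (X Y : Fin r → Set (Fin k → K)),
    (∀ i, ZClosed (X i) ∧ ZClosed (Y i)) ∧ S = ⋃ i, X i \ Y i

/-!
Choose `x N ∈ C N` and a nonprincipal ultrafilter `U` on `ℕ`. Each `C N` is a finite union of
sets `{z | f z = 0 for f ∈ T, g z ≠ 0}`, so one such set `B N ⊆ C N` contains `x M` for
`U`-almost all `M`. Evaluation at `(x M)_M` is a ring map from `K[X]` to the ultrapower field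
`K^U` whose kernel contains every `T N` and misses every `g N`. Adjoining a variable for the
inverse of each of the countably many `g N` reduces the search for a point of `⋂ N, B N` to the
weak Nullstellensatz in countably many variables. That holds over an uncountable algebraically
closed `K`: a residue field of such a polynomial ring has countable `K`-dimension, so it is
algebraic over `K`, hence equal to `K`.
-/

open MvPolynomial Cardinal Filter

theorem algebraMap_surjective_of_rank_le_aleph0 {K L : Type*} [Field K] [IsAlgClosed K]
    [Uncountable K] [Field L] [Algebra K L] (hL : Module.rank K L ≤ ℵ₀) :
    Function.Surjective (algebraMap K L) := by
  have : Algebra.IsIntegral K L := by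
    refine ⟨fun t => of_not_not fun ht => ?_⟩
    have hK := (Transcendental.linearIndependent_sub_inv
      (fun h => ht h.isIntegral)).cardinal_lift_le_rank
    exact (aleph0_lt_lift.2 (aleph0_lt_mk (α := K))).not_ge (hK.trans (lift_le_aleph0.2 hL))
  exact IsAlgClosed.algebraMap_bijective_of_isIntegral.2

namespace MvPolynomial

def basicLocus {K σ : Type*} [Field K] (T : Set (MvPolynomial σ K)) (g : MvPolynomial σ K) :
    Set (σ → K) :=
  {z | (∀ f ∈ T, eval z f = 0) ∧ eval z g ≠ 0}

section Nullstellensatz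

variable {K σ : Type*} [Field K] [IsAlgClosed K] [Uncountable K] [Countable σ]

theorem exists_eval_eq_zero_of_ne_top {I : Ideal (MvPolynomial σ K)} (hI : I ≠ ⊤) :
    ∃ z : σ → K, ∀ f ∈ I, eval z f = 0 := by
  obtain ⟨M, hM, hIM⟩ := Ideal.exists_le_maximal I hI
  let := Ideal.Quotient.field M
  have hrank : Module.rank K (MvPolynomial σ K ⧸ M) ≤ ℵ₀ := calc
    _ ≤ Module.rank K (MvPolynomial σ K) :=
      (Ideal.Quotient.mkₐ K M).toLinearMap.rank_le_of_surjective Ideal.Quotient.mk_surjective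
    _ ≤ ℵ₀ := by rw [rank_eq_lift]; exact lift_le_aleph0.2 mk_le_aleph0
  obtain ⟨z, hz⟩ := Classical.axiomOfChoice fun j =>
    algebraMap_surjective_of_rank_le_aleph0 hrank (Ideal.Quotient.mk M (X j))
  have hmk : Ideal.Quotient.mkₐ K M = (Algebra.ofId K _).comp (aeval z) :=
    algHom_ext fun j => by simp [hz j]
  refine ⟨z, fun f hf => (algebraMap K (MvPolynomial σ K ⧸ M)).injective ?_⟩
  have hf' := congr($hmk f)
  rw [Ideal.Quotient.mkₐ_eq_mk, Ideal.Quotient.eq_zero_iff_mem.2 (hIM hf)] at hf'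
  simpa [coe_aeval_eq_eval] using hf'.symm

theorem exists_ker_le_ker_eval_and_eval_ne_zero {L ι : Type*} [Field L] [Countable ι]
    (Φ : MvPolynomial σ K →+* L) (g : ι → MvPolynomial σ K) (hg : ∀ i, Φ (g i) ≠ 0) :
    ∃ y : σ → K, RingHom.ker Φ ≤ RingHom.ker (eval y) ∧ ∀ i, eval y (g i) ≠ 0 := by
  -- Rabinowitsch's trick: one new variable for each `(Φ (g i))⁻¹`
  let ψ : MvPolynomial (σ ⊕ ι) K →+* L :=
    eval₂Hom (Φ.comp C) (Sum.elim (Φ ∘ X) fun i => (Φ (g i))⁻¹)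
  have hψ (f : MvPolynomial σ K) : ψ (rename Sum.inl f) = Φ f := by
    have : ψ.comp (rename Sum.inl).toRingHom = Φ := ringHom_ext (by simp [ψ]) (by simp [ψ])
    exact congr($this f)
  obtain ⟨z, hz⟩ := exists_eval_eq_zero_of_ne_top (RingHom.ker_ne_top ψ)
  refine ⟨z ∘ Sum.inl, fun f hf => ?_, fun i hi => ?_⟩
  · rw [RingHom.mem_ker, ← eval_rename]
    exact hz _ (by rw [RingHom.mem_ker, hψ, hf])
  · have := hz (X (Sum.inr i) * rename Sum.inl (g i) - 1) (by
      rw [RingHom.mem_ker, map_sub, map_mul, hψ, map_one]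
      simp [ψ, inv_mul_cancel₀ (hg i)])
    simp [eval_rename, hi] at this

theorem nonempty_iInter_basicLocus {α ι : Type*} [Countable ι] (U : Ultrafilter α)
    (x : α → σ → K) (T : ι → Set (MvPolynomial σ K)) (g : ι → MvPolynomial σ K)
    (hx : ∀ i, ∀ᶠ a in U, x a ∈ basicLocus (T i) (g i)) :
    (⋂ i, basicLocus (T i) (g i)).Nonempty := by
  let Φ : MvPolynomial σ K →+* Germ (U : Filter α) K :=
    (Germ.coeRingHom _).comp (RingHom.pi fun a => eval (x a))
  have hΦ (f : MvPolynomial σ K) : Φ f = 0 ↔ ∀ᶠ a in U, eval (x a) f = 0 :=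
    Germ.coe_eq (g := 0)
  obtain ⟨y, hker, hy⟩ := exists_ker_le_ker_eval_and_eval_ne_zero Φ g fun i hi =>
    (((hΦ _).1 hi).and ((hx i).mono fun _ ha => ha.2)).exists.elim fun _ h => h.2 h.1
  exact ⟨y, Set.mem_iInter.2 fun i =>
    ⟨fun f hf => hker ((hΦ f).2 ((hx i).mono fun _ ha => ha.1 f hf)), hy i⟩⟩

end Nullstellensatz

end MvPolynomial

section Constructible

variable {K : Type*} [Field K] {k : ℕ}

theorem ZClosed.exists_finset {Y : Set (Fin k → K)} (hY : ZClosed Y) :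
    ∃ G : Finset (MvPolynomial (Fin k) K), Y = {z | ∀ p ∈ G, eval z p = 0} := by
  obtain ⟨T, rfl⟩ := hY
  obtain ⟨G, hG⟩ := IsNoetherian.noetherian (Ideal.span T)
  have hspan (S : Set (MvPolynomial (Fin k) K)) (z : Fin k → K) :
      (∀ p ∈ S, eval z p = 0) ↔ Ideal.span S ≤ RingHom.ker (eval z) := by
    simp [Ideal.span_le, Set.subset_def]
  refine ⟨G, Set.ext fun z => ?_⟩
  simp only [Set.mem_ofPred_eq, hspan, ← Finset.mem_coe (s := G), hG]

theorem ZConstructible.exists_finite_basicLocus {S : Set (Fin k → K)} (hS : ZConstructible S) :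
    ∃ s : Set (Set (MvPolynomial (Fin k) K) × MvPolynomial (Fin k) K),
      s.Finite ∧ S = ⋃ p ∈ s, basicLocus p.1 p.2 := by
  obtain ⟨r, X, Y, hXY, rfl⟩ := hS
  choose T hT using fun i => (hXY i).1
  choose G hG using fun i => (hXY i).2.exists_finset
  refine ⟨⋃ i, Prod.mk (T i) '' G i,
    Set.finite_iUnion fun i => (G i).finite_toSet.image _, ?_⟩
  have hdiff (i : Fin r) : X i \ Y i = ⋃ q ∈ G i, basicLocus (T i) q := by
    ext z
    simp [basicLocus, hT, hG]
  simp only [hdiff, Set.biUnion_iUnion, Set.biUnion_image, Finset.mem_coe]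

theorem ZConstructible.exists_basicLocus_subset_eventually {α : Type*} {S : Set (Fin k → K)}
    (hS : ZConstructible S) (U : Ultrafilter α) (x : α → Fin k → K)
    (hx : ∀ᶠ a in U, x a ∈ S) :
    ∃ T g, basicLocus T g ⊆ S ∧ ∀ᶠ a in U, x a ∈ basicLocus T g := by
  obtain ⟨s, hs, rfl⟩ := hS.exists_finite_basicLocus
  have hU : x ⁻¹' ⋃ p ∈ s, basicLocus p.1 p.2 ∈ U := hx
  rw [Set.preimage_iUnion₂] at hU
  obtain ⟨p, hp, hpU⟩ := (Ultrafilter.finite_biUnion_mem_iff hs).1 hU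
  exact ⟨p.1, p.2, Set.subset_biUnion_of_mem (u := fun p => basicLocus p.1 p.2) hp, hpU⟩

end Constructible

/-- Over an uncountable algebraically closed field, a decreasing sequence of nonempty
constructible subsets of `K^k` has nonempty intersection. -/
theorem decreasing_constructible_inter_nonempty {K : Type*} [Field K] [IsAlgClosed K]
    [Uncountable K] {k : ℕ} (C : ℕ → Set (Fin k → K))
    (hcon : ∀ N, ZConstructible (C N)) (hne : ∀ N, (C N).Nonempty)
    (hdec : ∀ N, C (N + 1) ⊆ C N) :
    (⋂ N, C N).Nonempty := by
  choose x hx using hne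
  have hev (N : ℕ) : ∀ᶠ M in hyperfilter ℕ, x M ∈ C N :=
    (eventually_ge_atTop N).filter_mono (hyperfilter_le_cofinite.trans Nat.cofinite_eq_atTop.le)
      |>.mono fun M hM => antitone_nat_of_succ_le hdec hM (hx M)
  choose T g hsub hT using fun N => (hcon N).exists_basicLocus_subset_eventually _ x (hev N)
  obtain ⟨y, hy⟩ := nonempty_iInter_basicLocus _ x T g hT
  exact ⟨y, Set.iInter_mono hsub hy⟩
end
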